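/- arXiv:2311.15799 — 6 statements merged into one kernel-verified Lean document; each statement's English description precedes it below -/
import Mathlib

section
/- Let y ∈ ℝⁿ satisfy Ay = 0, cᵀy < 0, and y_i ≥ 0 for all i ∈ N (the nonbasic set of a basis B). Then there exists an index f ∈ N with y_f > 0 and c̄_{N,f} < 0, where c̄_N is the reduced cost vector for B. In particular the set S(B) ∩ {i ∈ N : y_i > 0} is nonempty, where S(B) = {i ∈ N : c̄_{N,i} < 0}. -/
open Matrix Finset

/-- The `m × m` submatrix of `A` formed by the columns indexed by the basis `β`. -/
def subCols {m n : ℕ} (A : Matrix (Fin m) (Fin n) ℝ) (β : Fin m ↪ Fin n) :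
    Matrix (Fin m) (Fin m) ℝ :=
  Matrix.of fun i k => A i (β k)

/-- The nonbasic index set `N = [n] \ B`. -/
def nonbasic {m n : ℕ} (β : Fin m ↪ Fin n) : Finset (Fin n) :=
  Finset.univ \ Finset.univ.image ⇑β

/-- The entry `Ā_{i f} = (A_B⁻¹ A)_{i f}` (column `f` of `A_B⁻¹ A`). -/
noncomputable def Abar {m n : ℕ} (A : Matrix (Fin m) (Fin n) ℝ) (β : Fin m ↪ Fin n)
    (f : Fin n) (i : Fin m) : ℝ :=
  ((subCols A β)⁻¹.mulVec (fun r => A r f)) i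

/-- The reduced cost `c̄_j = c_j - ((A_B⁻¹ A_N)ᵀ c_B)_j`. -/
noncomputable def redCost {m n : ℕ} (A : Matrix (Fin m) (Fin n) ℝ) (c : Fin n → ℝ)
    (β : Fin m ↪ Fin n) (j : Fin n) : ℝ :=
  c j - ∑ i, Abar A β j i * c (β i)

/-- Feasibility for the LP `min cᵀx, Ax = b, x ≥ 0`. -/
def IsFeasible {m n : ℕ} (A : Matrix (Fin m) (Fin n) ℝ) (b : Fin m → ℝ)
    (x : Fin n → ℝ) : Prop :=
  A.mulVec x = b ∧ ∀ j, 0 ≤ x j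

/-- `x` is the basic feasible solution associated with the basis `β`. -/
def IsBasicFeasible {m n : ℕ} (A : Matrix (Fin m) (Fin n) ℝ) (b : Fin m → ℝ)
    (x : Fin n → ℝ) (β : Fin m ↪ Fin n) : Prop :=
  IsUnit (subCols A β) ∧ IsFeasible A b x ∧ ∀ j ∈ nonbasic β, x j = 0

/-- `x` is a basic feasible solution (for some basis). -/
def IsBFS {m n : ℕ} (A : Matrix (Fin m) (Fin n) ℝ) (b : Fin m → ℝ)
    (x : Fin n → ℝ) : Prop :=
  ∃ β : Fin m ↪ Fin n, IsBasicFeasible A b x β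

/-- `β` is a feasible basis. -/
def IsFeasibleBasis {m n : ℕ} (A : Matrix (Fin m) (Fin n) ℝ) (b : Fin m → ℝ)
    (β : Fin m ↪ Fin n) : Prop :=
  IsUnit (subCols A β) ∧ ∃ x, IsFeasible A b x ∧ ∀ j ∈ nonbasic β, x j = 0

/-- an improving direction nonnegative on `N` has an index `f ∈ N`
with `y_f > 0` and negative reduced cost. -/
theorem stmt3 (m n : ℕ) (A : Matrix (Fin m) (Fin n) ℝ) (c : Fin n → ℝ)
    (β : Fin m ↪ Fin n) (hB : IsUnit (subCols A β))
    (y : Fin n → ℝ) (hyk : A.mulVec y = 0)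
    (hyc : ∑ j, c j * y j < 0)
    (hyN : ∀ j ∈ nonbasic β, 0 ≤ y j) :
    ∃ f ∈ nonbasic β, 0 < y f ∧ redCost A c β f < 0 := by
  have hdet : IsUnit (subCols A β).det := (Matrix.isUnit_iff_isUnit_det _).mp hB
  have hinv : (subCols A β)⁻¹ * subCols A β = 1 := Matrix.nonsing_inv_mul _ hdet
  -- ∑_j Abar j i * y j = 0
  have hker : ∀ i, ∑ j, Abar A β j i * y j = 0 := by
    intro i
    have : ∑ j, Abar A β j i * y j
        = ∑ r, (subCols A β)⁻¹ i r * (A.mulVec y) r := by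
      simp only [Abar, Matrix.mulVec, dotProduct]
      simp_rw [Finset.sum_mul, Finset.mul_sum]
      rw [Finset.sum_comm]
      apply Finset.sum_congr rfl; intro r _
      apply Finset.sum_congr rfl; intro j _; ring
    rw [this, hyk]; simp
  -- total cost identity
  have hkey : ∑ j, redCost A c β j * y j = ∑ j, c j * y j := by
    simp only [redCost, sub_mul]
    rw [Finset.sum_sub_distrib]
    have : ∑ j, (∑ i, Abar A β j i * c (β i)) * y j = 0 := by
      have : ∑ j, (∑ i, Abar A β j i * c (β i)) * y j
          = ∑ i, c (β i) * ∑ j, Abar A β j i * y j := by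
        simp_rw [Finset.sum_mul, Finset.mul_sum]
        rw [Finset.sum_comm]
        apply Finset.sum_congr rfl; intro i _
        apply Finset.sum_congr rfl; intro j _; ring
      rw [this]
      simp [hker]
    rw [this, sub_zero]
  -- redCost vanishes on basic indices
  have hbasic : ∀ k : Fin m, redCost A c β (β k) = 0 := by
    intro k
    have hAbar : ∀ i, Abar A β (β k) i = (1 : Matrix (Fin m) (Fin m) ℝ) i k := by
      intro i
      have : Abar A β (β k) i = ((subCols A β)⁻¹ * subCols A β) i k := by
        simp [Abar, Matrix.mulVec, Matrix.mul_apply, dotProduct, subCols]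
      rw [this, hinv]
    simp only [redCost, hAbar]
    rw [Finset.sum_congr rfl (fun i _ => rfl)]
    simp [Matrix.one_apply, Finset.sum_ite_eq', Finset.mem_univ]
  -- restrict sum to nonbasic
  have hsumN : ∑ j ∈ nonbasic β, redCost A c β j * y j = ∑ j, redCost A c β j * y j := by
    apply Finset.sum_subset (Finset.subset_univ _)
    intro j _ hj
    have : j ∈ Finset.univ.image ⇑β := by
      simp only [nonbasic, Finset.mem_sdiff, Finset.mem_univ, true_and, not_not] at hj
      exact hj
    obtain ⟨k, _, hk⟩ := Finset.mem_image.mp this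
    rw [← hk, hbasic]; ring
  have hneg : ∑ j ∈ nonbasic β, redCost A c β j * y j < 0 := by
    rw [hsumN, hkey]; exact hyc
  by_contra hc
  push_neg at hc
  have : (0:ℝ) ≤ ∑ j ∈ nonbasic β, redCost A c β j * y j := by
    apply Finset.sum_nonneg
    intro j hj
    rcases lt_or_eq_of_le (hyN j hj) with hpos | heq
    · have := hc j hj hpos
      exact mul_nonneg this (le_of_lt hpos)
    · rw [← heq]; simp
  linarith
end

section
/- Let y⁰ be an improving feasible direction at a basic feasible solution x with basis B, let f ∈ N with y⁰_f > 0 and c̄_f < 0, and let z be the associated ray direction (z_B = -Ā_{·f}, z_f = 1, z zero elsewhere on N). Suppose Ā_{if} ≤ 0 for all degenerate basic indices i with y⁰_i = 0, and Ā_{gf} > 0 for some degenerate basic index g with y⁰_g > 0. Set α := min{ y⁰_i / Ā_{if} : i ∈ B, x_i = 0, y⁰_i > 0, Ā_{if} > 0 } > 0 and y¹ := y⁰ + αz. Then y¹ is again an improving feasible direction at x (Ay¹ = 0, cᵀy¹ < cᵀy⁰ < 0, and y¹_i ≥ 0 for all i with x_i = 0), and y¹_g = 0 for the index g attaining the minimum.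 -/
open Matrix Finset

/-! Moving along the ray `z` of the entering column `f` keeps `A y = 0` because `A z = 0`, and
changes the cost by `α c̄_f < 0`. The only coordinates of `y⁰` that can become negative are the
degenerate basic ones with `Ā_{if} > 0`; by the case hypothesis these have `y⁰_i > 0`, and the
ratio test `α ≤ y⁰_i / Ā_{if}` is exactly what keeps them nonnegative, with equality at `g`. -/

section Ray

variable {m n : ℕ} {β : Fin m ↪ Fin n} {f : Fin n} {w : Fin m → ℝ} {z : Fin n → ℝ}

theorem dotProduct_ray (hf : f ∈ nonbasic β) (hzB : ∀ i, z (β i) = -w i) (hzf : z f = 1)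
    (hzN : ∀ j ∈ nonbasic β, j ≠ f → z j = 0) (v : Fin n → ℝ) :
    v ⬝ᵥ z = v f - ∑ i, w i * v (β i) := by
  have hbasic : ∑ j ∈ univ.image β, v j * z j = -∑ i, w i * v (β i) := by
    rw [sum_image fun a _ b _ h => β.injective h, ← sum_neg_distrib]
    exact sum_congr rfl fun i _ => by rw [hzB i]; ring
  have hnonbasic : ∑ j ∈ nonbasic β, v j * z j = v f := by
    rw [sum_eq_single_of_mem f hf fun j hj hjf => by rw [hzN j hj hjf, mul_zero], hzf, mul_one]
  rw [dotProduct, ← sum_sdiff (subset_univ (univ.image β))]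
  change ∑ j ∈ nonbasic β, v j * z j + _ = _
  rw [hbasic, hnonbasic, sub_eq_add_neg]

theorem add_smul_ray_nonneg {x y : Fin n → ℝ} {α : ℝ} (hα : 0 ≤ α)
    (hzB : ∀ i, z (β i) = -w i) (hzf : z f = 1) (hzN : ∀ j ∈ nonbasic β, j ≠ f → z j = 0)
    (hy : ∀ i, x i = 0 → 0 ≤ y i)
    (hratio : ∀ k, x (β k) = 0 → 0 < w k → α ≤ y (β k) / w k) :
    ∀ i, x i = 0 → 0 ≤ (y + α • z) i := by
  intro i hi
  have hyi := hy i hi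
  simp only [Pi.add_apply, Pi.smul_apply, smul_eq_mul]
  by_cases hib : i ∈ univ.image β
  · obtain ⟨k, -, rfl⟩ := mem_image.mp hib
    rw [hzB k]
    rcases le_or_gt (w k) 0 with hk | hk
    · nlinarith
    · nlinarith [(le_div_iff₀ hk).mp (hratio k hi hk)]
  · by_cases hif : i = f
    · subst hif; rw [hzf]; linarith
    · rw [hzN i (mem_sdiff.mpr ⟨mem_univ i, hib⟩) hif]; simpa using hyi

end Ray

section Tableau

variable {m n : ℕ} {A : Matrix (Fin m) (Fin n) ℝ} {β : Fin m ↪ Fin n}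

theorem subCols_mulVec_Abar (hB : IsUnit (subCols A β)) (f : Fin n) :
    subCols A β *ᵥ Abar A β f = fun r => A r f := by
  unfold Abar
  rw [mulVec_mulVec, mul_nonsing_inv _ ((isUnit_iff_isUnit_det _).mp hB), one_mulVec]

theorem sum_Abar_mul (hB : IsUnit (subCols A β)) (f : Fin n) (r : Fin m) :
    ∑ i, Abar A β f i * A r (β i) = A r f := by
  rw [← congrFun (subCols_mulVec_Abar hB f) r]
  simp only [mulVec, dotProduct, subCols, of_apply, mul_comm]

theorem mulVec_ray_eq_zero {f : Fin n} {z : Fin n → ℝ} (hB : IsUnit (subCols A β))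
    (hf : f ∈ nonbasic β) (hzB : ∀ i, z (β i) = -Abar A β f i) (hzf : z f = 1)
    (hzN : ∀ j ∈ nonbasic β, j ≠ f → z j = 0) :
    A *ᵥ z = 0 := by
  funext r
  rw [mulVec, dotProduct_ray hf hzB hzf hzN, sum_Abar_mul hB, sub_self, Pi.zero_apply]

end Tableau

theorem stmt5_general (m n : ℕ) (A : Matrix (Fin m) (Fin n) ℝ) (b : Fin m → ℝ) (c : Fin n → ℝ)
    (β : Fin m ↪ Fin n) (x : Fin n → ℝ) (hx : IsBasicFeasible A b x β)
    (y0 : Fin n → ℝ) (hy0ker : A.mulVec y0 = 0)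
    (hy0feas : ∀ i, x i = 0 → 0 ≤ y0 i)
    (f : Fin n) (hf : f ∈ nonbasic β) (hcf : redCost A c β f < 0)
    (z : Fin n → ℝ)
    (hzB : ∀ i, z (β i) = - Abar A β f i) (hzf : z f = 1)
    (hzN : ∀ j ∈ nonbasic β, j ≠ f → z j = 0)
    (hcase : ∀ i, x (β i) = 0 → y0 (β i) = 0 → Abar A β f i ≤ 0)
    (g : Fin m) (hg2 : 0 < y0 (β g)) (hg3 : 0 < Abar A β f g)
    (α : ℝ) (hα : α = y0 (β g) / Abar A β f g)
    (hαmin : ∀ i, x (β i) = 0 → 0 < y0 (β i) → 0 < Abar A β f i →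
      α ≤ y0 (β i) / Abar A β f i)
    (y1 : Fin n → ℝ) (hy1 : y1 = y0 + α • z) :
    0 < α ∧ A.mulVec y1 = 0 ∧
      ∑ j, c j * y1 j < ∑ j, c j * y0 j ∧
      (∀ i, x i = 0 → 0 ≤ y1 i) ∧
      y1 (β g) = 0 := by
  have hαpos : 0 < α := hα ▸ div_pos hg2 hg3
  have hcost : c ⬝ᵥ z = redCost A c β f := dotProduct_ray hf hzB hzf hzN c
  have hratio : ∀ k, x (β k) = 0 → 0 < Abar A β f k → α ≤ y0 (β k) / Abar A β f k :=
    fun k hk hAk => hαmin k hk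
      ((hy0feas _ hk).lt_of_ne fun h => (hcase k hk h.symm).not_gt hAk) hAk
  subst hy1
  refine ⟨hαpos, ?_, ?_, add_smul_ray_nonneg hαpos.le hzB hzf hzN hy0feas hratio, ?_⟩
  · rw [mulVec_add, mulVec_smul, hy0ker, mulVec_ray_eq_zero hx.1 hf hzB hzf hzN, smul_zero,
      add_zero]
  · change c ⬝ᵥ (y0 + α • z) < c ⬝ᵥ y0
    rw [dotProduct_add, dotProduct_smul, hcost, smul_eq_mul]
    nlinarith
  · simp only [Pi.add_apply, Pi.smul_apply, smul_eq_mul, hzB g, hα]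
    field_simp
    ring

/-- Case III update `y¹ = y⁰ + αz` yields again an improving feasible
direction at `x`, with `y¹_g = 0` at the index attaining the minimum. -/
theorem stmt5 (m n : ℕ) (A : Matrix (Fin m) (Fin n) ℝ) (b : Fin m → ℝ) (c : Fin n → ℝ)
    (β : Fin m ↪ Fin n) (x : Fin n → ℝ) (hx : IsBasicFeasible A b x β)
    (y0 : Fin n → ℝ) (hy0ker : A.mulVec y0 = 0)
    (hy0imp : ∑ j, c j * y0 j < 0)
    (hy0feas : ∀ i, x i = 0 → 0 ≤ y0 i)
    (f : Fin n) (hf : f ∈ nonbasic β) (hyf : 0 < y0 f) (hcf : redCost A c β f < 0)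
    (z : Fin n → ℝ)
    (hzB : ∀ i, z (β i) = - Abar A β f i) (hzf : z f = 1)
    (hzN : ∀ j ∈ nonbasic β, j ≠ f → z j = 0)
    (hcase : ∀ i, x (β i) = 0 → y0 (β i) = 0 → Abar A β f i ≤ 0)
    (g : Fin m) (hg1 : x (β g) = 0) (hg2 : 0 < y0 (β g)) (hg3 : 0 < Abar A β f g)
    (α : ℝ) (hα : α = y0 (β g) / Abar A β f g)
    (hαmin : ∀ i, x (β i) = 0 → 0 < y0 (β i) → 0 < Abar A β f i →
      α ≤ y0 (β i) / Abar A β f i)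
    (y1 : Fin n → ℝ) (hy1 : y1 = y0 + α • z) :
    0 < α ∧ A.mulVec y1 = 0 ∧
      ∑ j, c j * y1 j < ∑ j, c j * y0 j ∧
      (∀ i, x i = 0 → 0 ≤ y1 i) ∧
      y1 (β g) = 0 :=
  stmt5_general m n A b c β x hx y0 hy0ker hy0feas f hf hcf z hzB hzf hzN hcase g hg2 hg3 α hα hαmin
    y1 hy1
end

section
/- Let x be a basic feasible solution with basis B and suppose y ∈ ℝⁿ satisfies Ay = 0, y_N ≥ 0, and y_i = 0 for all i ∈ N (the nonbasic indices). Then cᵀy = 0; in particular y cannot be an improving direction. Consequently, if an improving feasible direction y⁰ has nonbasic support of size q, any sequence of consecutive degenerate antistalling pivots at x (each decreasing the nonbasic support of the maintained improving direction by one) has length at most q - 1 ≤ n - m - 1. -/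
open Matrix Finset

lemma y_eq_zero {m n : ℕ} (A : Matrix (Fin m) (Fin n) ℝ) (β : Fin m ↪ Fin n)
    (hB : IsUnit (subCols A β)) (y : Fin n → ℝ) (hyk : A.mulVec y = 0)
    (hyN : ∀ j ∈ nonbasic β, y j = 0) : y = 0 := by
  have hz : ∀ j, j ∉ Finset.univ.image ⇑β → y j = 0 := by
    intro j hj
    exact hyN j (by simp [nonbasic, hj])
  have hmul : (subCols A β).mulVec (fun k => y (β k)) = 0 := by
    funext i
    have h1 : (subCols A β).mulVec (fun k => y (β k)) i = A.mulVec y i := by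
      simp only [Matrix.mulVec, dotProduct, subCols, Matrix.of_apply]
      rw [← Finset.sum_image (f := fun j => A i j * y j) (g := ⇑β)
        (fun a _ b _ h => β.injective h)]
      apply Finset.sum_subset (Finset.subset_univ _)
      intro j _ hj
      rw [hz j hj, mul_zero]
    simp [h1, hyk]
  have hdet : IsUnit (subCols A β).det := (Matrix.isUnit_iff_isUnit_det _).mp hB
  have hyβ : (fun k => y (β k)) = 0 := by
    have h2 := congrArg ((subCols A β)⁻¹.mulVec) hmul
    rwa [Matrix.mulVec_mulVec, Matrix.nonsing_inv_mul _ hdet, Matrix.one_mulVec,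
      Matrix.mulVec_zero] at h2
  funext j
  by_cases hj : j ∈ Finset.univ.image ⇑β
  · obtain ⟨k, _, rfl⟩ := Finset.mem_image.mp hj
    exact congrFun hyβ k
  · exact hz j hj

lemma nonbasic_card {m n : ℕ} (β : Fin m ↪ Fin n) : (nonbasic β).card = n - m := by
  rw [nonbasic, Finset.card_sdiff_of_subset (Finset.subset_univ _),
    Finset.card_image_of_injective _ β.injective]
  simp

/-- a kernel direction vanishing on the nonbasic indices has `cᵀy = 0`;
consequently any chain of improving feasible directions whose nonbasic support drops
by one at each (degenerate antistalling) pivot has length at most `q - 1 ≤ n - m - 1`. -/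
theorem stmt8 (m n : ℕ) (A : Matrix (Fin m) (Fin n) ℝ) (c : Fin n → ℝ)
    (hrank : A.rank = m)
    (β : Fin m ↪ Fin n) (hB : IsUnit (subCols A β))
    (y : Fin n → ℝ) (hyk : A.mulVec y = 0)
    (hyN0 : ∀ j ∈ nonbasic β, 0 ≤ y j)
    (hyN : ∀ j ∈ nonbasic β, y j = 0) :
    (∑ j, c j * y j = 0) ∧
    (∀ (k : ℕ) (βs : Fin (k + 1) → Fin m ↪ Fin n) (ys : Fin (k + 1) → Fin n → ℝ),
      (∀ t, IsUnit (subCols A (βs t))) →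
      (∀ t, A.mulVec (ys t) = 0) →
      (∀ t, ∑ j, c j * ys t j < 0) →
      (∀ t, ∀ j ∈ nonbasic (βs t), 0 ≤ ys t j) →
      (∀ t : Fin k,
        ((nonbasic (βs t.succ)).filter (fun j => 0 < ys t.succ j)).card + 1
          = ((nonbasic (βs t.castSucc)).filter (fun j => 0 < ys t.castSucc j)).card) →
      k ≤ ((nonbasic (βs 0)).filter (fun j => 0 < ys 0 j)).card - 1 ∧
        k ≤ n - m - 1) := by
  have hy0 : y = 0 := y_eq_zero A β hB y hyk hyN
  constructor
  · simp [hy0]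
  · intro k βs ys hU hK hC hN hstep
    set g : Fin (k + 1) → ℕ :=
      fun t => ((nonbasic (βs t)).filter (fun j => 0 < ys t j)).card with hg
    have hpos : ∀ t, 1 ≤ g t := by
      intro t
      by_contra h
      have hempty : (nonbasic (βs t)).filter (fun j => 0 < ys t j) = ∅ := by
        have : g t = 0 := by omega
        exact Finset.card_eq_zero.mp this
      have hzero : ∀ j ∈ nonbasic (βs t), ys t j = 0 := by
        intro j hj
        have hno : ¬ (0 < ys t j) := by
          intro hlt
          have : j ∈ (nonbasic (βs t)).filter (fun j => 0 < ys t j) :=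
            Finset.mem_filter.mpr ⟨hj, hlt⟩
          simp [hempty] at this
        exact le_antisymm (not_lt.mp hno) (hN t j hj)
      have hyst : ys t = 0 := y_eq_zero A (βs t) (hU t) (ys t) (hK t) hzero
      have hc := hC t
      rw [hyst] at hc
      simp at hc
    have hsum : ∀ i (hi : i < k + 1), g ⟨i, hi⟩ + i = g 0 := by
      intro i
      induction i with
      | zero => intro hi; rfl
      | succ p ih =>
        intro hi
        have hp : p < k := by omega
        have hs := hstep ⟨p, hp⟩
        have h1 : (⟨p, hp⟩ : Fin k).succ = ⟨p + 1, hi⟩ := rfl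
        have h2 : (⟨p, hp⟩ : Fin k).castSucc = ⟨p, by omega⟩ := rfl
        rw [h1, h2] at hs
        have := ih (by omega)
        change g ⟨p + 1, hi⟩ + 1 = g ⟨p, by omega⟩ at hs
        omega
    have hk : g ⟨k, by omega⟩ + k = g 0 := hsum k (by omega)
    have h1 : k + 1 ≤ g 0 := by have := hpos ⟨k, by omega⟩; omega
    have h2 : g 0 ≤ n - m := by
      calc g 0 ≤ (nonbasic (βs 0)).card := Finset.card_filter_le _ _
        _ = n - m := nonbasic_card _
    refine ⟨?_, by omega⟩
    have hgz : ((nonbasic (βs 0)).filter (fun j => 0 < ys 0 j)).card = g 0 := rfl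
    omega
end

section
/- (Antistalling bound) For the LP min{cᵀx : Ax = b, x ≥ 0} with A ∈ ℝ^{m×n} of full row rank, at any non-optimal basic feasible solution x there exists a sequence of simplex pivots (each with entering variable of negative reduced cost) containing at most n - m - 1 degenerate pivots before a non-degenerate pivot occurs. -/
/-! Take a feasible `x'` cheaper than `x` and put `d = x' - x`: then `A d = 0`, `cᵀd < 0` and
`d ≥ 0` wherever `x = 0`. Since `∑ c̄_j d_j = cᵀd` and `c̄` vanishes on the basis, some nonbasic
`f` has `c̄_f < 0 < d_f`. If every row `i` with `Ā_{if} > 0` has `x_{β i} > 0` (and boundedness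
forces such a row), entering `f` is a non-degenerate pivot. Otherwise pivot `f` in along the
degenerate row minimising `d_{β i} / Ā_{if}` and move `d` along the edge direction of `f` by that
ratio `t`: `d + t w` is again improving, `f` has left the set of nonbasic `j` with `d_j > 0`, and
nothing has entered it. This set has at most `n - m` elements and is nonempty while pivots remain,
so at most `n - m - 1` degenerate pivots occur. -/

open Matrix Finset

namespace Simplex

section

variable {m n : ℕ} {A : Matrix (Fin m) (Fin n) ℝ} {b : Fin m → ℝ} {c : Fin n → ℝ}
  {β : Fin m ↪ Fin n} {x d : Fin n → ℝ} {f : Fin n}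

lemma mem_nonbasic {j : Fin n} : j ∈ nonbasic β ↔ ∀ i, β i ≠ j := by
  simp [nonbasic]

lemma card_nonbasic : #(nonbasic β) = n - m := by
  rw [nonbasic, card_sdiff_of_subset (subset_univ _), card_image_of_injective _ β.injective]
  simp

lemma Abar_apply (j : Fin n) (i : Fin m) : Abar A β j i = ((subCols A β)⁻¹ * A) i j := by
  simp [Abar, mul_apply, mulVec, dotProduct]

lemma subCols_mulVec_Abar (hB : IsUnit (subCols A β)) (j : Fin n) :
    subCols A β *ᵥ Abar A β j = A.col j := by
  change subCols A β *ᵥ ((subCols A β)⁻¹ *ᵥ A.col j) = A.col j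
  rw [mulVec_mulVec, mul_nonsing_inv _ ((isUnit_iff_isUnit_det _).mp hB), one_mulVec]

lemma Abar_basic (hB : IsUnit (subCols A β)) (k : Fin m) :
    Abar A β (β k) = Pi.single k 1 := by
  have hcol : A.col (β k) = subCols A β *ᵥ Pi.single k 1 := by
    rw [mulVec_single_one]; rfl
  funext i
  rw [Abar, show (fun r => A r (β k)) = A.col (β k) from rfl, hcol, mulVec_mulVec,
    nonsing_inv_mul _ ((isUnit_iff_isUnit_det _).mp hB), one_mulVec]

lemma redCost_basic (hB : IsUnit (subCols A β)) (k : Fin m) : redCost A c β (β k) = 0 := by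
  simp [redCost, Abar_basic hB, Pi.single_apply]

lemma redCost_dotProduct (hd : A *ᵥ d = 0) : redCost A c β ⬝ᵥ d = c ⬝ᵥ d := by
  have hzero : ∀ i, ∑ j, Abar A β j i * d j = 0 := fun i => by
    simp only [Abar_apply]
    change (((subCols A β)⁻¹ * A) *ᵥ d) i = 0
    rw [← mulVec_mulVec, hd, mulVec_zero]; rfl
  simp only [dotProduct, redCost, sub_mul, sum_sub_distrib, sum_mul]
  rw [sum_comm (s := univ) (t := univ)]
  simp [mul_right_comm _ (c _), ← sum_mul, hzero]

noncomputable def edgeDir (A : Matrix (Fin m) (Fin n) ℝ) (β : Fin m ↪ Fin n) (f : Fin n) :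
    Fin n → ℝ :=
  Pi.single f 1 - ∑ i, Abar A β f i • Pi.single (β i) 1

lemma mulVec_edgeDir (hB : IsUnit (subCols A β)) : A *ᵥ edgeDir A β f = 0 := by
  have hbasic : ∑ i, Abar A β f i • A.col (β i) = subCols A β *ᵥ Abar A β f := by
    ext r; simp [mulVec, dotProduct, subCols, mul_comm]
  simp [edgeDir, mulVec_sub, mulVec_sum, mulVec_smul, hbasic, subCols_mulVec_Abar hB]

lemma dotProduct_edgeDir : c ⬝ᵥ edgeDir A β f = redCost A c β f := by
  simp [edgeDir, redCost, dotProduct_sub, dotProduct_sum]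

lemma edgeDir_apply_basic (hf : f ∈ nonbasic β) (i : Fin m) :
    edgeDir A β f (β i) = -Abar A β f i := by
  simp [edgeDir, Pi.single_apply, mem_nonbasic.mp hf i, β.injective.eq_iff]

lemma edgeDir_apply_self (hf : f ∈ nonbasic β) : edgeDir A β f f = 1 := by
  simp [edgeDir, fun i => (mem_nonbasic.mp hf i).symm]

lemma edgeDir_apply_nonbasic {j : Fin n} (hj : j ∈ nonbasic β) (hjf : j ≠ f) :
    edgeDir A β f j = 0 := by
  simp [edgeDir, hjf, fun i => (mem_nonbasic.mp hj i).symm]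

lemma add_smul_edgeDir_apply_nonneg {v : Fin n → ℝ} {t : ℝ} (hf : f ∈ nonbasic β)
    (ht : 0 ≤ t) {j : Fin n} (hv : 0 ≤ v j) (hbasic : ∀ i, β i = j → t * Abar A β f i ≤ v j) :
    0 ≤ (v + t • edgeDir A β f) j := by
  simp only [Pi.add_apply, Pi.smul_apply, smul_eq_mul]
  by_cases hjf : j = f
  · subst hjf; rw [edgeDir_apply_self hf]; linarith
  by_cases hjB : ∃ i, β i = j
  · obtain ⟨i, rfl⟩ := hjB
    rw [edgeDir_apply_basic hf]; linarith [hbasic i rfl]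
  · rw [edgeDir_apply_nonbasic (mem_nonbasic.mpr fun i hi => hjB ⟨i, hi⟩) hjf]; simpa

def pivot (β : Fin m ↪ Fin n) (i : Fin m) (f : Fin n) (hf : f ∈ nonbasic β) :
    Fin m ↪ Fin n :=
  ⟨Function.update β i f, by
    intro k l hkl
    by_cases hk : k = i <;> by_cases hl : l = i <;>
      simp only [Function.update_apply, hk, hl, if_true, if_false] at hkl
    · exact hk.trans hl.symm
    · exact absurd hkl.symm (mem_nonbasic.mp hf l)
    · exact absurd hkl (mem_nonbasic.mp hf k)
    · exact β.injective hkl⟩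

variable {i : Fin m} {hf : f ∈ nonbasic β}

lemma pivot_apply (k : Fin m) : pivot β i f hf k = Function.update β i f k := rfl

lemma image_pivot : univ.image (pivot β i f hf) = insert f ((univ.image β).erase (β i)) := by
  ext j
  simp only [mem_image, mem_insert, mem_erase, mem_univ, true_and, pivot_apply,
    Function.update_apply]
  constructor
  · rintro ⟨k, rfl⟩
    by_cases hk : k = i
    · simp [hk]
    · simp [hk, β.injective.ne hk]
  · rintro (rfl | ⟨hne, k, rfl⟩)
    · exact ⟨i, by simp⟩
    · exact ⟨k, by simp [show k ≠ i from fun h => hne (h ▸ rfl)]⟩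

lemma mem_nonbasic_pivot {j : Fin n} :
    j ∈ nonbasic (pivot β i f hf) ↔ j ≠ f ∧ (j = β i ∨ j ∈ nonbasic β) := by
  simp only [nonbasic, mem_sdiff, image_pivot, mem_insert, mem_erase, mem_univ, true_and]
  tauto

lemma subCols_pivot (hB : IsUnit (subCols A β)) :
    subCols A (pivot β i f hf) =
      subCols A β * (1 : Matrix (Fin m) (Fin m) ℝ).updateCol i (Abar A β f) := by
  ext r s
  by_cases hs : s = i
  · subst hs
    have := congrFun (subCols_mulVec_Abar hB f) r
    simp_all [subCols, pivot_apply, mul_apply, mulVec, dotProduct]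
  · simp [subCols, pivot_apply, mul_apply, hs, one_apply]

lemma isUnit_subCols_pivot (hB : IsUnit (subCols A β)) (ha : Abar A β f i ≠ 0) :
    IsUnit (subCols A (pivot β i f hf)) := by
  have hdet : ((1 : Matrix (Fin m) (Fin m) ℝ).updateCol i (Abar A β f)).det = Abar A β f i := by
    rw [← cramer_apply, cramer_one]; rfl
  rw [isUnit_iff_isUnit_det, subCols_pivot hB, det_mul, hdet]
  exact ((isUnit_iff_isUnit_det _).mp hB).mul ha.isUnit

lemma isBasicFeasible_pivot (hx : IsBasicFeasible A b x β) (ha : Abar A β f i ≠ 0)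
    (hxi : x (β i) = 0) : IsBasicFeasible A b x (pivot β i f hf) := by
  refine ⟨isUnit_subCols_pivot hx.1 ha, hx.2.1, fun j hj => ?_⟩
  obtain ⟨-, rfl | hj⟩ := mem_nonbasic_pivot.mp hj
  exacts [hxi, hx.2.2 j hj]

lemma exists_pos_Abar (hbdd : ∃ L : ℝ, ∀ x', IsFeasible A b x' → L ≤ c ⬝ᵥ x')
    (hx : IsBasicFeasible A b x β) (hf : f ∈ nonbasic β) (hred : redCost A c β f < 0) :
    ∃ i, 0 < Abar A β f i := by
  by_contra! hAbar
  obtain ⟨L, hL⟩ := hbdd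
  obtain ⟨hB, ⟨hAx, hx0⟩, -⟩ := hx
  -- the step along the edge ray at which the cost drops to `L - 1`
  set θ := (c ⬝ᵥ x - L + 1) / -redCost A c β f
  have hθ : 0 ≤ θ := div_nonneg (by linarith [hL x ⟨hAx, hx0⟩]) (by linarith)
  have hfeas : IsFeasible A b (x + θ • edgeDir A β f) :=
    ⟨by rw [mulVec_add, mulVec_smul, mulVec_edgeDir hB, smul_zero, add_zero, hAx],
      fun j => add_smul_edgeDir_apply_nonneg hf hθ (hx0 j) fun i _ =>
        (mul_nonpos_of_nonneg_of_nonpos hθ (hAbar i)).trans (hx0 _)⟩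
  have hθr : θ * redCost A c β f = -(c ⬝ᵥ x - L + 1) := by
    simp only [θ]
    field_simp [hred.ne]
  have hcost : c ⬝ᵥ (x + θ • edgeDir A β f) = L - 1 := by
    rw [dotProduct_add, dotProduct_smul, dotProduct_edgeDir, smul_eq_mul, hθr]
    ring
  linarith [hL _ hfeas]

def IsDegeneratePivot (A : Matrix (Fin m) (Fin n) ℝ) (c x : Fin n → ℝ)
    (β β' : Fin m ↪ Fin n) : Prop :=
  ∃ f ∈ nonbasic β, ∃ i : Fin m, redCost A c β f < 0 ∧ x (β i) = 0 ∧ 0 < Abar A β f i ∧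
    univ.image β' = insert f ((univ.image β).erase (β i))

def HasNondegeneratePivot (A : Matrix (Fin m) (Fin n) ℝ) (c x : Fin n → ℝ)
    (β : Fin m ↪ Fin n) : Prop :=
  ∃ f ∈ nonbasic β, redCost A c β f < 0 ∧ (∃ i, 0 < Abar A β f i) ∧
    ∀ i, 0 < Abar A β f i → 0 < x (β i)

def ReachesNondegeneratePivot (A : Matrix (Fin m) (Fin n) ℝ) (b : Fin m → ℝ)
    (c x : Fin n → ℝ) (β : Fin m ↪ Fin n) (k : ℕ) : Prop :=
  ∃ βs : Fin (k + 1) → Fin m ↪ Fin n, βs 0 = β ∧ (∀ t, IsBasicFeasible A b x (βs t)) ∧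
    (∀ t : Fin k, IsDegeneratePivot A c x (βs t.castSucc) (βs t.succ)) ∧
    HasNondegeneratePivot A c x (βs (Fin.last k))

lemma ReachesNondegeneratePivot.zero (hx : IsBasicFeasible A b x β)
    (h : HasNondegeneratePivot A c x β) : ReachesNondegeneratePivot A b c x β 0 :=
  ⟨fun _ => β, rfl, fun _ => hx, Fin.elim0, h⟩

lemma ReachesNondegeneratePivot.cons {β' : Fin m ↪ Fin n} {k : ℕ}
    (h : ReachesNondegeneratePivot A b c x β' k) (hx : IsBasicFeasible A b x β)
    (hpiv : IsDegeneratePivot A c x β β') : ReachesNondegeneratePivot A b c x β (k + 1) := by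
  obtain ⟨βs, rfl, hbfs, hsteps, hlast⟩ := h
  refine ⟨Fin.cons β βs, rfl, Fin.cases hx hbfs, Fin.cases hpiv fun t => ?_,
    by simpa [← Fin.succ_last] using hlast⟩
  simpa [← Fin.succ_castSucc] using hsteps t

def IsImprovingDirection (A : Matrix (Fin m) (Fin n) ℝ) (c x d : Fin n → ℝ) : Prop :=
  A *ᵥ d = 0 ∧ c ⬝ᵥ d < 0 ∧ ∀ j, x j = 0 → 0 ≤ d j

lemma isImprovingDirection_sub {y : Fin n → ℝ} (hx : IsFeasible A b x) (hy : IsFeasible A b y)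
    (hlt : c ⬝ᵥ y < c ⬝ᵥ x) : IsImprovingDirection A c x (y - x) :=
  ⟨by rw [mulVec_sub, hx.1, hy.1, sub_self], by rwa [dotProduct_sub, sub_neg],
    fun j hj => by simpa [hj] using hy.2 j⟩

lemma exists_entering (hx : IsBasicFeasible A b x β) (hd : IsImprovingDirection A c x d) :
    ∃ f ∈ nonbasic β, redCost A c β f < 0 ∧ 0 < d f := by
  obtain ⟨f, hf⟩ : ∃ f, redCost A c β f * d f < 0 := by
    by_contra! h
    exact (redCost_dotProduct hd.1 ▸ hd.2.1).not_ge (sum_nonneg fun j _ => h j)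
  have hfN : f ∈ nonbasic β := mem_nonbasic.mpr fun i hi => by
    simp [← hi, redCost_basic hx.1] at hf
  have hdf : 0 ≤ d f := hd.2.2 f (hx.2.2 f hfN)
  exact ⟨f, hfN, by nlinarith, lt_of_le_of_ne hdf (by rintro h; simp [← h] at hf)⟩

lemma isImprovingDirection_add_smul_edgeDir {t : ℝ} (hB : IsUnit (subCols A β))
    (hd : IsImprovingDirection A c x d) (hf : f ∈ nonbasic β) (hred : redCost A c β f < 0)
    (ht : 0 ≤ t) (hratio : ∀ i, x (β i) = 0 → t * Abar A β f i ≤ d (β i)) :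
    IsImprovingDirection A c x (d + t • edgeDir A β f) := by
  refine ⟨by rw [mulVec_add, mulVec_smul, hd.1, mulVec_edgeDir hB, smul_zero, add_zero], ?_,
    fun j hj => add_smul_edgeDir_apply_nonneg hf ht (hd.2.2 j hj) fun i hi =>
      hi ▸ hratio i (by rwa [hi])⟩
  rw [dotProduct_add, dotProduct_smul, dotProduct_edgeDir, smul_eq_mul]
  nlinarith [hd.2.1]

lemma card_filter_nonbasic_pivot_lt {d' : Fin n → ℝ} (hdf : 0 < d f) (hleave : d' (β i) ≤ 0)
    (heq : ∀ j ∈ nonbasic β, j ≠ f → d' j = d j) :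
    #{j ∈ nonbasic (pivot β i f hf) | 0 < d' j} < #{j ∈ nonbasic β | 0 < d j} := by
  have hf_mem : f ∈ {j ∈ nonbasic β | 0 < d j} := mem_filter.mpr ⟨hf, hdf⟩
  refine (card_le_card fun j hj => ?_).trans_lt (card_erase_lt_of_mem hf_mem)
  obtain ⟨hjN, hj⟩ := mem_filter.mp hj
  obtain ⟨hjf, rfl | hjN⟩ := mem_nonbasic_pivot.mp hjN
  · exact absurd hj hleave.not_gt
  · exact mem_erase.mpr ⟨hjf, mem_filter.mpr ⟨hjN, heq j hjN hjf ▸ hj⟩⟩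

lemma exists_degeneratePivot_decreasing (hx : IsBasicFeasible A b x β)
    (hd : IsImprovingDirection A c x d) (hf : f ∈ nonbasic β) (hred : redCost A c β f < 0)
    (hdf : 0 < d f) (hdeg : ∃ i, 0 < Abar A β f i ∧ x (β i) = 0) :
    ∃ i, x (β i) = 0 ∧ 0 < Abar A β f i ∧ ∃ d', IsImprovingDirection A c x d' ∧
      #{j ∈ nonbasic (pivot β i f hf) | 0 < d' j} < #{j ∈ nonbasic β | 0 < d j} := by
  obtain ⟨i, hi, hmin⟩ := exists_min_image {i | 0 < Abar A β f i ∧ x (β i) = 0}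
    (fun i => d (β i) / Abar A β f i) (by simpa [Finset.Nonempty] using hdeg)
  obtain ⟨hai, hxi⟩ := (mem_filter.mp hi).2
  set t := d (β i) / Abar A β f i
  have ht : 0 ≤ t := div_nonneg (hd.2.2 _ hxi) hai.le
  have hratio : ∀ k, x (β k) = 0 → t * Abar A β f k ≤ d (β k) := fun k hxk => by
    rcases le_or_gt (Abar A β f k) 0 with hk | hk
    · nlinarith [hd.2.2 _ hxk]
    · exact (le_div_iff₀ hk).mp (hmin k (by simp [hk, hxk]))
  refine ⟨i, hxi, hai, d + t • edgeDir A β f,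
    isImprovingDirection_add_smul_edgeDir hx.1 hd hf hred ht hratio,
    card_filter_nonbasic_pivot_lt hdf ?_ fun j hj hjf => ?_⟩
  · simp [edgeDir_apply_basic hf, t, hai.ne']
  · simp [edgeDir_apply_nonbasic hj hjf]

end

theorem exists_reachesNondegeneratePivot {m n : ℕ} {A : Matrix (Fin m) (Fin n) ℝ}
    {b : Fin m → ℝ} {c x : Fin n → ℝ} (hbdd : ∃ L : ℝ, ∀ x', IsFeasible A b x' → L ≤ c ⬝ᵥ x')
    {β : Fin m ↪ Fin n} {d : Fin n → ℝ} (hx : IsBasicFeasible A b x β)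
    (hd : IsImprovingDirection A c x d) :
    ∃ k < #{j ∈ nonbasic β | 0 < d j}, ReachesNondegeneratePivot A b c x β k := by
  obtain ⟨f, hf, hred, hdf⟩ := exists_entering hx hd
  by_cases hdeg : ∃ i, 0 < Abar A β f i ∧ x (β i) = 0
  · obtain ⟨i, hxi, hai, d', hd', hlt⟩ :=
      exists_degeneratePivot_decreasing hx hd hf hred hdf hdeg
    obtain ⟨k, hk, hpath⟩ :=
      exists_reachesNondegeneratePivot hbdd (isBasicFeasible_pivot hx hai.ne' hxi) hd'
    exact ⟨k + 1, by omega, hpath.cons hx ⟨f, hf, i, hred, hxi, hai, image_pivot (hf := hf)⟩⟩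
  · push Not at hdeg
    have hnondeg : ∀ i, 0 < Abar A β f i → 0 < x (β i) := fun i hi =>
      (hx.2.1.2 _).lt_of_ne fun h => hdeg i hi h.symm
    exact ⟨0, card_pos.mpr ⟨f, mem_filter.mpr ⟨hf, hdf⟩⟩,
      .zero hx ⟨f, hf, hred, exists_pos_Abar hbdd hx hf hred, hnondeg⟩⟩
termination_by #{j ∈ nonbasic β | 0 < d j}

end Simplex

theorem stmt9_general (m n : ℕ) (A : Matrix (Fin m) (Fin n) ℝ) (b : Fin m → ℝ) (c : Fin n → ℝ)
    (hbdd : ∃ L : ℝ, ∀ x', IsFeasible A b x' → L ≤ ∑ j, c j * x' j)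
    (x : Fin n → ℝ) (β0 : Fin m ↪ Fin n) (hx : IsBasicFeasible A b x β0)
    (hnonopt : ∃ x', IsFeasible A b x' ∧ ∑ j, c j * x' j < ∑ j, c j * x j) :
    ∃ k : ℕ, k ≤ n - m - 1 ∧
      ∃ βs : Fin (k + 1) → Fin m ↪ Fin n,
        βs 0 = β0 ∧
        (∀ t, IsBasicFeasible A b x (βs t)) ∧
        -- each step is a degenerate simplex pivot with entering variable of
        -- negative reduced cost (min ratio 0)
        (∀ t : Fin k, ∃ f ∈ nonbasic (βs t.castSucc), ∃ i : Fin m,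
          redCost A c (βs t.castSucc) f < 0 ∧
          x (βs t.castSucc i) = 0 ∧ 0 < Abar A (βs t.castSucc) f i ∧
          Finset.univ.image ⇑(βs t.succ)
            = insert f ((Finset.univ.image ⇑(βs t.castSucc)).erase (βs t.castSucc i))) ∧
        -- at the last basis a non-degenerate pivot occurs: some entering variable
        -- with negative reduced cost has strictly positive minimum ratio
        (∃ f ∈ nonbasic (βs (Fin.last k)),
          redCost A c (βs (Fin.last k)) f < 0 ∧
          (∃ i, 0 < Abar A (βs (Fin.last k)) f i) ∧
          ∀ i, 0 < Abar A (βs (Fin.last k)) f i → 0 < x (βs (Fin.last k) i)) := by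
  obtain ⟨x', hx', hlt⟩ := hnonopt
  obtain ⟨k, hk, hpath⟩ :=
    Simplex.exists_reachesNondegeneratePivot hbdd hx
      (Simplex.isImprovingDirection_sub hx.2.1 hx' hlt)
  have hcard : #{j ∈ nonbasic β0 | 0 < (x' - x) j} ≤ n - m :=
    (card_filter_le _ _).trans Simplex.card_nonbasic.le
  exact ⟨k, by omega, hpath⟩

/-- Antistalling bound: at any non-optimal BFS there is a sequence of
simplex pivots (entering variable with negative reduced cost) with at most
`n - m - 1` degenerate pivots before a non-degenerate pivot occurs. -/
theorem stmt9 (m n : ℕ) (A : Matrix (Fin m) (Fin n) ℝ) (b : Fin m → ℝ) (c : Fin n → ℝ)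
    (hrank : A.rank = m)
    (hbdd : ∃ L : ℝ, ∀ x', IsFeasible A b x' → L ≤ ∑ j, c j * x' j)
    (x : Fin n → ℝ) (β0 : Fin m ↪ Fin n) (hx : IsBasicFeasible A b x β0)
    (hnonopt : ∃ x', IsFeasible A b x' ∧ ∑ j, c j * x' j < ∑ j, c j * x j) :
    ∃ k : ℕ, k ≤ n - m - 1 ∧
      ∃ βs : Fin (k + 1) → Fin m ↪ Fin n,
        βs 0 = β0 ∧
        (∀ t, IsBasicFeasible A b x (βs t)) ∧
        -- each step is a degenerate simplex pivot with entering variable of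
        -- negative reduced cost (min ratio 0)
        (∀ t : Fin k, ∃ f ∈ nonbasic (βs t.castSucc), ∃ i : Fin m,
          redCost A c (βs t.castSucc) f < 0 ∧
          x (βs t.castSucc i) = 0 ∧ 0 < Abar A (βs t.castSucc) f i ∧
          Finset.univ.image ⇑(βs t.succ)
            = insert f ((Finset.univ.image ⇑(βs t.castSucc)).erase (βs t.castSucc i))) ∧
        -- at the last basis a non-degenerate pivot occurs: some entering variable
        -- with negative reduced cost has strictly positive minimum ratio
        (∃ f ∈ nonbasic (βs (Fin.last k)),
          redCost A c (βs (Fin.last k)) f < 0 ∧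
          (∃ i, 0 < Abar A (βs (Fin.last k)) f i) ∧
          ∀ i, 0 < Abar A (βs (Fin.last k)) f i → 0 < x (βs (Fin.last k) i)) :=
  stmt9_general m n A b c hbdd x β0 hx hnonopt
end

section
/- Let x be a basic feasible solution with basis B and nonbasic set N, and let x⋆ be an optimal basic feasible solution. Suppose y ∈ ℝⁿ satisfies Ay = 0, y_N ≥ 0, cᵀy ≤ cᵀ(x⋆ - x), and y_i ≤ Δ for all i ∈ N with y_i > 0. Then cᵀx - cᵀx⋆ ≤ (n - m)·Δ_c̄·Δ, where Δ_c̄ := max{ -c̄_{N,i} : i ∈ N, y_i > 0 } is the largest absolute reduced cost over the positive nonbasic support of y. -/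
open Matrix Finset

section Aux
variable {m n : ℕ} (A : Matrix (Fin m) (Fin n) ℝ) (c : Fin n → ℝ) (β : Fin m ↪ Fin n)

lemma sum_redCost_eq (y : Fin n → ℝ) (hy : A.mulVec y = 0) :
    ∑ j, redCost A c β j * y j = ∑ j, c j * y j := by
  unfold redCost Abar
  simp only [sub_mul, Finset.sum_sub_distrib, Finset.sum_mul, mulVec, dotProduct]
  have hAy : ∀ r, ∑ j, A r j * y j = 0 := by
    intro r
    have := congrFun hy r
    simpa [mulVec, dotProduct] using this
  have h0 : ∀ i : Fin m, ∑ j, ∑ r, (subCols A β)⁻¹ i r * A r j * c (β i) * y j = 0 := by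
    intro i
    rw [Finset.sum_comm]
    apply Finset.sum_eq_zero
    intro r _
    have : ∀ j, (subCols A β)⁻¹ i r * A r j * c (β i) * y j
        = (subCols A β)⁻¹ i r * c (β i) * (A r j * y j) := by intro j; ring
    simp only [this, ← Finset.mul_sum, hAy r, mul_zero]
  rw [Finset.sum_comm]
  simp [h0]

lemma redCost_basic (hU : IsUnit (subCols A β)) (k : Fin m) :
    redCost A c β (β k) = 0 := by
  have hdet : IsUnit (subCols A β).det := (Matrix.isUnit_iff_isUnit_det _).mp hU
  have hinv : (subCols A β)⁻¹ * subCols A β = 1 := Matrix.nonsing_inv_mul _ hdet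
  have habar : ∀ i, Abar A β (β k) i = (1 : Matrix (Fin m) (Fin m) ℝ) i k := by
    intro i
    have : Abar A β (β k) i = ((subCols A β)⁻¹ * subCols A β) i k := by
      simp [Abar, mulVec, dotProduct, Matrix.mul_apply, subCols]
    rw [this, hinv]
  simp only [redCost, habar]
  simp [Matrix.one_apply]

end Aux

/-- optimality gap bound `cᵀx - cᵀx⋆ ≤ (n - m)·Δ_c̄·Δ`. -/
theorem stmt12 (m n : ℕ) (A : Matrix (Fin m) (Fin n) ℝ) (b : Fin m → ℝ) (c : Fin n → ℝ)
    (β : Fin m ↪ Fin n) (x : Fin n → ℝ) (hx : IsBasicFeasible A b x β)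
    (xstar : Fin n → ℝ) (hxstar : IsFeasible A b xstar)
    (hopt : ∀ x', IsFeasible A b x' → ∑ j, c j * xstar j ≤ ∑ j, c j * x' j)
    (Δ : ℝ) (hΔ : 0 < Δ)
    (y : Fin n → ℝ) (hyk : A.mulVec y = 0)
    (hyN : ∀ j ∈ nonbasic β, 0 ≤ y j)
    (hyc : ∑ j, c j * y j ≤ ∑ j, c j * (xstar j - x j))
    (hyΔ : ∀ j ∈ nonbasic β, 0 < y j → y j ≤ Δ)
    (Δc : ℝ) (hΔc0 : 0 ≤ Δc)
    (hΔc : ∀ j ∈ nonbasic β, 0 < y j → -redCost A c β j ≤ Δc) :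
    ∑ j, c j * x j - ∑ j, c j * xstar j ≤ ((n - m : ℕ) : ℝ) * Δc * Δ := by
  have h1 : ∑ j, c j * x j - ∑ j, c j * xstar j ≤ -∑ j, c j * y j := by
    have : ∑ j, c j * (xstar j - x j) = ∑ j, c j * xstar j - ∑ j, c j * x j := by
      simp [mul_sub, Finset.sum_sub_distrib]
    linarith [hyc, this ▸ hyc]
  have h2 : ∑ j, c j * y j = ∑ j ∈ nonbasic β, redCost A c β j * y j := by
    rw [← sum_redCost_eq A c β y hyk]
    rw [← Finset.sum_subset (Finset.subset_univ (nonbasic β))]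
    intro j _ hj
    have : j ∈ Finset.univ.image ⇑β := by
      simp only [nonbasic, Finset.mem_sdiff, Finset.mem_univ, true_and] at hj
      simpa using hj
    obtain ⟨k, _, hk⟩ := Finset.mem_image.mp this
    rw [← hk, redCost_basic A c β hx.1 k, zero_mul]
  have h3 : -∑ j, c j * y j ≤ ∑ j ∈ nonbasic β, Δc * Δ := by
    rw [h2, ← Finset.sum_neg_distrib]
    apply Finset.sum_le_sum
    intro j hj
    rcases lt_or_eq_of_le (hyN j hj) with hpos | hzero
    · have := hΔc j hj hpos
      have hb := hyΔ j hj hpos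
      have : -(redCost A c β j * y j) = (-redCost A c β j) * y j := by ring
      rw [this]
      rcases le_or_gt (-redCost A c β j) 0 with hneg | hposr
      · calc (-redCost A c β j) * y j ≤ 0 := mul_nonpos_of_nonpos_of_nonneg hneg hpos.le
          _ ≤ Δc * Δ := mul_nonneg hΔc0 hΔ.le
      · exact mul_le_mul (hΔc j hj hpos) hb hpos.le hΔc0
    · rw [← hzero]
      simp [mul_nonneg hΔc0 hΔ.le]
  have hcard : (nonbasic β).card = n - m := by
    simp [nonbasic, Finset.card_sdiff_of_subset (Finset.subset_univ _),
      Finset.card_image_of_injective _ β.injective]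
  calc ∑ j, c j * x j - ∑ j, c j * xstar j ≤ -∑ j, c j * y j := h1
    _ ≤ ∑ j ∈ nonbasic β, Δc * Δ := h3
    _ = ((n - m : ℕ) : ℝ) * Δc * Δ := by
        rw [Finset.sum_const, hcard]; ring
end

section
/- Suppose a non-degenerate simplex pivot at basic feasible solution x with basis B has entering index f with reduced cost c̄_{N,f} = -Δ_c̄ < 0 and results in basic feasible solution x' with x'_f ≥ δ > 0. If in addition cᵀx - cᵀx⋆ ≤ (n - m)·Δ_c̄·Δ for an optimal solution x⋆, then cᵀx' - cᵀx⋆ ≤ (1 - δ/((n-m)Δ))·(cᵀx - cᵀx⋆). -/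
open Matrix Finset

/-- a non-degenerate pivot with entering reduced cost `-Δ_c̄` and new
entering value at least `δ` contracts the optimality gap by `1 - δ/((n-m)Δ)`. -/
theorem stmt13 (m n : ℕ) (A : Matrix (Fin m) (Fin n) ℝ) (b : Fin m → ℝ) (c : Fin n → ℝ)
    (β : Fin m ↪ Fin n) (x : Fin n → ℝ) (hx : IsBasicFeasible A b x β)
    (x' : Fin n → ℝ) (hx' : IsBFS A b x')
    (xstar : Fin n → ℝ) (hxstar : IsFeasible A b xstar)
    (f : Fin n) (hf : f ∈ nonbasic β)
    (δ Δ Δc : ℝ) (hδ : 0 < δ) (hΔ : 0 < Δ) (hΔc : 0 < Δc)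
    (hmn : m < n)
    (hred : redCost A c β f = -Δc)
    (hxf : δ ≤ x' f)
    (hstep : ∑ j, c j * x j - ∑ j, c j * x' j = Δc * x' f)
    (hgap : ∑ j, c j * x j - ∑ j, c j * xstar j ≤ ((n - m : ℕ) : ℝ) * Δc * Δ) :
    ∑ j, c j * x' j - ∑ j, c j * xstar j
      ≤ (1 - δ / (((n - m : ℕ) : ℝ) * Δ)) *
          (∑ j, c j * x j - ∑ j, c j * xstar j) := by
  have hK : (0:ℝ) < ((n - m : ℕ) : ℝ) := by
    exact_mod_cast Nat.sub_pos_of_lt hmn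
  have hKΔ : (0:ℝ) < ((n - m : ℕ) : ℝ) * Δ := mul_pos hK hΔ
  set G := ∑ j, c j * x j - ∑ j, c j * xstar j with hG
  have key : ∑ j, c j * x' j - ∑ j, c j * xstar j = G - Δc * x' f := by
    have := hstep; linarith
  rw [key]
  have hr : 0 < δ / (((n - m : ℕ) : ℝ) * Δ) := div_pos hδ hKΔ
  have h1 : δ / (((n - m : ℕ) : ℝ) * Δ) * (((n - m : ℕ) : ℝ) * Δ) = δ :=
    div_mul_cancel₀ _ (ne_of_gt hKΔ)
  have h2 : δ / (((n - m : ℕ) : ℝ) * Δ) * G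
      ≤ δ / (((n - m : ℕ) : ℝ) * Δ) * (((n - m : ℕ) : ℝ) * Δc * Δ) :=
    mul_le_mul_of_nonneg_left hgap (le_of_lt hr)
  have h3 : δ / (((n - m : ℕ) : ℝ) * Δ) * (((n - m : ℕ) : ℝ) * Δc * Δ) = Δc * δ := by
    field_simp
  have h4 : Δc * δ ≤ Δc * x' f := mul_le_mul_of_nonneg_left hxf (le_of_lt hΔc)
  nlinarith [h2, h3, h4]
end
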